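/- Let g, h ∈ ℝ[x], let B ⊆ ℝ be a finite set, and let t ∈ (0,1] satisfy t|B| ≥ 1. Define P = {(b_1, b_2) ∈ B² : (b_1, b_2) is t-close in B and not bad} and S_t = {(b_1, b_2, c_1, c_2) ∈ P × P : h(b_1) + h(c_1) = h(b_2) + h(c_2)}. Suppose R, S ⊆ P and the integer m ≥ 1 are such that |R| = |S| and for each pair (b_1, b_2) ∈ R the number of pairs (c_1, c_2) ∈ S with (b_1, b_2, c_1, c_2) ∈ S_t lies in [m, 2m]. Set S_t* = S_t ∩ (R × S) and r = max{ |R|/(64t|B|²), t }, and define T_{t,r} = {(β_1, β_2, b_1′, b_2′, c_1, c_2) ∈ (B+B)² × B² × S : h(β_1 − b_1′) + h(c_1) = h(β_2 − b_2′) + h(c_2), and the pairs (β_1, β_2) and (b_1′, b_2′) are (t/r)-close in B + B and in B respectively}. Then |T_{t,r}| ≥ (t/(128r))·|B|²·|S_t*|. -/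

import Mathlib

open Polynomial Finset Pointwise

/-- The (1-based) index of `x` in the increasing enumeration of the finite set `X ⊆ ℝ`. -/
noncomputable def idx (X : Finset ℝ) (x : ℝ) : ℕ :=
  (X.filter (fun y => y ≤ x)).card

/-- A pair `(x₁, x₂)` is `t`-close with respect to `X` if their indices differ by at most
`t|X|`. -/
def tClose (X : Finset ℝ) (t x₁ x₂ : ℝ) : Prop :=
  |(idx X x₁ : ℝ) - (idx X x₂ : ℝ)| ≤ t * (X.card : ℝ)

/-- A bivariate real polynomial is reducible if it is a product of two nonconstant
polynomials. -/
def RedBiv (F : MvPolynomial (Fin 2) ℝ) : Prop :=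
  ∃ F₁ F₂ : MvPolynomial (Fin 2) ℝ, F = F₁ * F₂ ∧ 1 ≤ F₁.totalDegree ∧ 1 ≤ F₂.totalDegree

/-- The bivariate polynomial `q(x) - q(y)`. -/
noncomputable def bivDiff (q : Polynomial ℝ) : MvPolynomial (Fin 2) ℝ :=
  Polynomial.aeval (MvPolynomial.X 0) q - Polynomial.aeval (MvPolynomial.X 1) q

/-- The pair `(b₁, b₂)` is bad if `g(x) - g(y) + h(b₁) - h(b₂)` or
`h(x) - h(y) + h(b₁) - h(b₂)` is reducible in `ℝ[x, y]`. -/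
def Bad (g h : Polynomial ℝ) (b₁ b₂ : ℝ) : Prop :=
  RedBiv (bivDiff g + MvPolynomial.C (h.eval b₁ - h.eval b₂)) ∨
  RedBiv (bivDiff h + MvPolynomial.C (h.eval b₁ - h.eval b₂))

/-- The set `P` of `t`-close, non-bad pairs from `B²`. -/
def Pset (g h : Polynomial ℝ) (B : Finset ℝ) (t : ℝ) : Set (ℝ × ℝ) :=
  {q | q.1 ∈ B ∧ q.2 ∈ B ∧ tClose B t q.1 q.2 ∧ ¬ Bad g h q.1 q.2}

/-- The set `S_t ⊆ P × P`. -/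
def StP (g h : Polynomial ℝ) (B : Finset ℝ) (t : ℝ) : Set ((ℝ × ℝ) × (ℝ × ℝ)) :=
  {x | x.1 ∈ Pset g h B t ∧ x.2 ∈ Pset g h B t ∧
    h.eval x.1.1 + h.eval x.2.1 = h.eval x.1.2 + h.eval x.2.2}

/-- The set `T_{t,r}` of 6-tuples. -/
def Ttr (h : Polynomial ℝ) (B : Finset ℝ) (S : Set (ℝ × ℝ)) (t r : ℝ) :
    Set (ℝ × ℝ × ℝ × ℝ × ℝ × ℝ) :=
  {x | ∃ β₁ β₂ b₁' b₂' c₁ c₂ : ℝ, x = (β₁, β₂, b₁', b₂', c₁, c₂) ∧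
    β₁ ∈ B + B ∧ β₂ ∈ B + B ∧ b₁' ∈ B ∧ b₂' ∈ B ∧ (c₁, c₂) ∈ S ∧
    h.eval (β₁ - b₁') + h.eval c₁ = h.eval (β₂ - b₂') + h.eval c₂ ∧
    tClose (B + B) (t / r) β₁ β₂ ∧ tClose B (t / r) b₁' b₂'}

lemma idx_mono (X : Finset ℝ) {x y : ℝ} (h : x ≤ y) : idx X x ≤ idx X y := by
  apply Finset.card_le_card
  intro a ha
  simp only [mem_filter] at *
  exact ⟨ha.1, ha.2.trans h⟩

lemma idx_le_card (X : Finset ℝ) (x : ℝ) : idx X x ≤ X.card :=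
  Finset.card_le_card (filter_subset _ _)

lemma idx_pos (X : Finset ℝ) {x : ℝ} (hx : x ∈ X) : 1 ≤ idx X x := by
  rw [Nat.one_le_iff_ne_zero, ← Nat.pos_iff_ne_zero]
  apply Finset.card_pos.2 ⟨x, by simp [hx]⟩

lemma idx_strict (X : Finset ℝ) {x y : ℝ} (hy : y ∈ X) (h : x < y) :
    idx X x < idx X y := by
  apply Finset.card_lt_card
  constructor
  · intro a ha; simp only [mem_filter] at *; exact ⟨ha.1, ha.2.trans h.le⟩
  · intro hsub
    have := hsub (by simp [hy] : y ∈ X.filter (fun z => z ≤ y))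
    simp only [mem_filter] at this
    exact absurd this.2 (not_le.2 h)

lemma idx_injOn (X : Finset ℝ) : Set.InjOn (idx X) X := by
  intro x hx y hy hxy
  by_contra hne
  rcases lt_or_gt_of_ne hne with hl | hl
  · exact absurd hxy (Nat.ne_of_lt (idx_strict X hy hl))
  · exact absurd hxy.symm (Nat.ne_of_lt (idx_strict X hx hl))

lemma idx_lt_iff (X : Finset ℝ) {x y : ℝ} (hx : x ∈ X) (hy : y ∈ X) :
    idx X x < idx X y ↔ x < y := by
  constructor
  · intro hlt
    by_contra hle
    push_neg at hle
    exact absurd (idx_mono X hle) (not_le.2 hlt)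
  · exact idx_strict X hy

lemma idx_image (X : Finset ℝ) : X.image (idx X) = Finset.Icc 1 X.card := by
  apply Finset.eq_of_subset_of_card_le
  · intro i hi
    simp only [mem_image] at hi
    obtain ⟨x, hx, rfl⟩ := hi
    exact Finset.mem_Icc.2 ⟨idx_pos X hx, idx_le_card X x⟩
  · rw [Nat.card_Icc]
    simp [Finset.card_image_of_injOn (idx_injOn X)]

lemma idx_block_card (X : Finset ℝ) (lo hi : ℕ) (hhi : hi ≤ X.card) :
    (X.filter (fun a => lo < idx X a ∧ idx X a ≤ hi)).card = hi - lo := by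
  have hinj : Set.InjOn (idx X) (X.filter (fun a => lo < idx X a ∧ idx X a ≤ hi)) :=
    (idx_injOn X).mono (by intro a ha; exact mem_coe.2 (mem_of_mem_filter a ha))
  rw [← Finset.card_image_of_injOn hinj]
  have : (X.filter (fun a => lo < idx X a ∧ idx X a ≤ hi)).image (idx X)
      = (X.image (idx X)).filter (fun i => lo < i ∧ i ≤ hi) := by
    rw [Finset.filter_image]
  rw [this, idx_image]
  have : (Finset.Icc 1 X.card).filter (fun i => lo < i ∧ i ≤ hi) = Finset.Ioc lo hi := by
    ext i
    simp only [mem_filter, Finset.mem_Icc, Finset.mem_Ioc]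
    omega
  rw [this, Nat.card_Ioc]

lemma idx_diff (X : Finset ℝ) {u v : ℝ} (h : u ≤ v) :
    idx X v = idx X u + (X.filter (fun s => u < s ∧ s ≤ v)).card := by
  rw [idx, idx, ← Finset.card_union_of_disjoint]
  · congr 1
    ext s
    simp only [mem_union, mem_filter]
    constructor
    · rintro ⟨hs, hsv⟩
      by_cases hu : s ≤ u
      · exact Or.inl ⟨hs, hu⟩
      · exact Or.inr ⟨hs, not_le.1 hu, hsv⟩
    · rintro (⟨hs, hsu⟩ | ⟨hs, _, hsv⟩)
      · exact ⟨hs, hsu.trans h⟩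
      · exact ⟨hs, hsv⟩
  · rw [Finset.disjoint_left]
    rintro s hs1 hs2
    simp only [mem_filter] at *
    exact absurd hs1.2 (not_le.2 hs2.2.1)

lemma idx_abs_diff (X : Finset ℝ) (u v : ℝ) :
    |(idx X u : ℝ) - (idx X v : ℝ)|
      = ((X.filter (fun s => min u v < s ∧ s ≤ max u v)).card : ℝ) := by
  rcases le_total u v with h | h
  · rw [abs_sub_comm, abs_of_nonneg (sub_nonneg.2 (by exact_mod_cast idx_mono X h)),
      min_eq_left h, max_eq_right h, idx_diff X h]
    push_cast; ring
  · rw [abs_of_nonneg (sub_nonneg.2 (by exact_mod_cast idx_mono X h)),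
      min_eq_right h, max_eq_left h, idx_diff X h]
    push_cast; ring

lemma straddle_half (B : Finset ℝ) (R' : Finset (ℝ × ℝ)) (K : ℕ) (x : ℝ)
    (hBR : ∀ q ∈ R', q.1 ∈ B ∧ q.2 ∈ B ∧ idx B q.2 ≤ idx B q.1 + K) :
    (R'.filter (fun q => q.1 < x ∧ x ≤ q.2)).card ≤ K * K := by
  set p := (B.filter (fun s => s < x)).card with hp
  have key : ∀ q ∈ R'.filter (fun q => q.1 < x ∧ x ≤ q.2),
      (idx B q.1, idx B q.2) ∈ (Finset.Ioc (p - K) p) ×ˢ (Finset.Ioc p (p + K)) := by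
    intro q hq
    rw [mem_filter] at hq
    obtain ⟨hqR, hq1, hq2⟩ := hq
    obtain ⟨hB1, hB2, hK⟩ := hBR q hqR
    have h1 : idx B q.1 ≤ p := by
      apply Finset.card_le_card
      intro s hs
      rw [mem_filter] at *
      exact ⟨hs.1, lt_of_le_of_lt hs.2 hq1⟩
    have h2 : p < idx B q.2 := by
      apply Finset.card_lt_card
      constructor
      · intro s hs
        rw [mem_filter] at *
        exact ⟨hs.1, le_of_lt (lt_of_lt_of_le hs.2 hq2)⟩
      · intro hsub
        have := hsub (mem_filter.2 ⟨hB2, le_refl _⟩)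
        rw [mem_filter] at this
        exact absurd hq2 (not_le.2 this.2)
    have hpos : 1 ≤ idx B q.1 := idx_pos B hB1
    simp only [Finset.mem_product, Finset.mem_Ioc]
    exact ⟨⟨by omega, h1⟩, ⟨h2, by omega⟩⟩
  calc (R'.filter (fun q => q.1 < x ∧ x ≤ q.2)).card
      ≤ ((Finset.Ioc (p - K) p) ×ˢ (Finset.Ioc p (p + K))).card := by
        apply Finset.card_le_card_of_injOn _ key
        intro q hq q' hq' heq
        simp only [Finset.coe_filter, Set.mem_setOf_eq] at hq hq'
        obtain ⟨hB1, hB2, -⟩ := hBR q hq.1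
        obtain ⟨hB1', hB2', -⟩ := hBR q' hq'.1
        have e1 := idx_injOn B hB1 hB1' (congrArg Prod.fst heq)
        have e2 := idx_injOn B hB2 hB2' (congrArg Prod.snd heq)
        exact Prod.ext e1 e2
    _ ≤ K * K := by
        rw [Finset.card_product, Nat.card_Ioc, Nat.card_Ioc]
        have : p - (p - K) ≤ K := by omega
        exact Nat.mul_le_mul this (by omega)

lemma straddle (B : Finset ℝ) (R' : Finset (ℝ × ℝ)) (K : ℕ) (x : ℝ)
    (hBR : ∀ q ∈ R', q.1 ∈ B ∧ q.2 ∈ B ∧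
      idx B q.2 ≤ idx B q.1 + K ∧ idx B q.1 ≤ idx B q.2 + K) :
    (R'.filter (fun q => min q.1 q.2 < x ∧ x ≤ max q.1 q.2)).card ≤ 2 * (K * K) := by
  have hsub : R'.filter (fun q => min q.1 q.2 < x ∧ x ≤ max q.1 q.2)
      ⊆ (R'.filter (fun q => q.1 < x ∧ x ≤ q.2)) ∪ (R'.filter (fun q => q.2 < x ∧ x ≤ q.1)) := by
    intro q hq
    rw [mem_filter] at hq
    obtain ⟨hqR, hmin, hmax⟩ := hq
    rw [mem_union, mem_filter, mem_filter]
    rcases le_total q.1 q.2 with hc | hc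
    · rw [min_eq_left hc] at hmin; rw [max_eq_right hc] at hmax
      exact Or.inl ⟨hqR, hmin, hmax⟩
    · rw [min_eq_right hc] at hmin; rw [max_eq_left hc] at hmax
      exact Or.inr ⟨hqR, hmin, hmax⟩
  calc (R'.filter (fun q => min q.1 q.2 < x ∧ x ≤ max q.1 q.2)).card
      ≤ _ := Finset.card_le_card hsub
    _ ≤ (R'.filter (fun q => q.1 < x ∧ x ≤ q.2)).card
        + (R'.filter (fun q => q.2 < x ∧ x ≤ q.1)).card := Finset.card_union_le _ _
    _ ≤ K * K + K * K := by
        apply Nat.add_le_add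
        · exact straddle_half B R' K x (fun q hq => ⟨(hBR q hq).1, (hBR q hq).2.1, (hBR q hq).2.2.1⟩)
        · have := straddle_half B (R'.image (fun q => (q.2, q.1))) K x
            (fun q hq => by
              simp only [Finset.mem_image] at hq
              obtain ⟨q', hq', rfl⟩ := hq
              exact ⟨(hBR q' hq').2.1, (hBR q' hq').1, (hBR q' hq').2.2.2⟩)
          refine le_trans (le_of_eq ?_) this
          conv_rhs => rw [Finset.filter_image]
          rw [Finset.card_image_of_injective _
            (fun a b hab => Prod.ext (congrArg Prod.snd hab) (congrArg Prod.fst hab))]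
    _ = 2 * (K * K) := by ring

open scoped Classical in
lemma telescope_sum (u v : ℕ → ℝ) :
    ∀ M : ℕ, 1 ≤ M → (∀ k, k + 1 < M → u k ≤ v (k + 1)) →
      ∑ k ∈ Finset.range M, (u k - v k) ≤ u (M - 1) - v 0 := by
  intro M
  induction M with
  | zero => intro h; omega
  | succ M ih =>
    intro _ h2
    rcases Nat.eq_or_lt_of_le (Nat.one_le_iff_ne_zero.2 (Nat.succ_ne_zero M)) with heq | hlt
    · have : M = 0 := by omega
      subst this
      simp
    · have hM1 : 1 ≤ M := by omega
      have := ih hM1 (fun k hk => h2 k (by omega))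
      rw [Finset.sum_range_succ]
      have huv : u (M - 1) ≤ v M := by
        have := h2 (M - 1) (by omega)
        rwa [Nat.sub_add_cancel hM1] at this
      have : u (M + 1 - 1) = u M := by norm_num
      rw [this]
      linarith

open scoped Classical in
set_option maxHeartbeats 1000000 in
lemma good_lower (B C : Finset ℝ) (b₁ b₂ : ℝ) (τ : ℝ) (L M : ℕ)
    (hτ0 : 0 < τ) (hτ1 : τ ≤ 1) (hN : 0 < C.card)
    (hL1 : 1 ≤ L) (hLle : (L : ℝ) ≤ τ * B.card / 4) (hM : M = B.card / L) :
    (L : ℝ)^2 * M - 2 * (L : ℝ)^2 / τ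
      - 2 * (L : ℝ) / (τ * C.card) * (∑ a ∈ B, |(idx C (b₁+a) : ℝ) - (idx C (b₂+a) : ℝ)|)
    ≤ (((B ×ˢ B).filter
        (fun a => tClose B τ a.1 a.2 ∧ tClose C τ (b₁+a.1) (b₂+a.2))).card : ℝ) := by
  set n := B.card with hn
  set N := C.card with hNdef
  have hNR : (0:ℝ) < N := by exact_mod_cast hN
  set f : ℝ → ℝ := fun a => (idx C (b₁ + a) : ℝ) with hf
  set g : ℝ → ℝ := fun a => (idx C (b₂ + a) : ℝ) with hg
  have fmono : ∀ x y : ℝ, x ≤ y → f x ≤ f y := by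
    intro x y hxy
    simp only [hf]
    exact_mod_cast idx_mono C (by linarith : b₁ + x ≤ b₁ + y)
  set Dq : ℝ := ∑ a ∈ B, |f a - g a| with hDq
  have hDq0 : 0 ≤ Dq := Finset.sum_nonneg (fun a _ => abs_nonneg _)
  -- blocks
  set blk : ℕ → Finset ℝ := fun k => B.filter (fun a => k*L < idx B a ∧ idx B a ≤ (k+1)*L)
    with hblk
  have hML : M * L ≤ n := by rw [hM]; exact Nat.div_mul_le_self n L
  have hblkcard : ∀ k < M, (blk k).card = L := by
    intro k hk
    have h1 : (k+1)*L ≤ n := le_trans (Nat.mul_le_mul_right L hk) hML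
    rw [hblk]
    simp only
    rw [idx_block_card B (k*L) ((k+1)*L) h1, Nat.succ_mul]
    omega
  have hblkne : ∀ k < M, (blk k).Nonempty := by
    intro k hk
    rw [← Finset.card_pos, hblkcard k hk]; omega
  have hblkB : ∀ k, blk k ⊆ B := fun k => Finset.filter_subset _ _
  set mn : ℕ → ℝ := fun k => if hk : (blk k).Nonempty then (blk k).min' hk else 0 with hmn
  set mx : ℕ → ℝ := fun k => if hk : (blk k).Nonempty then (blk k).max' hk else 0 with hmxd
  have hmn_mem : ∀ k < M, mn k ∈ blk k := by
    intro k hk; rw [hmn]; simp only [dif_pos (hblkne k hk)]; exact Finset.min'_mem _ _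
  have hmx_mem : ∀ k < M, mx k ∈ blk k := by
    intro k hk; rw [hmxd]; simp only [dif_pos (hblkne k hk)]; exact Finset.max'_mem _ _
  have hmn_le : ∀ k (hk : k < M), ∀ a ∈ blk k, mn k ≤ a := by
    intro k hk a ha; rw [hmn]; simp only [dif_pos (hblkne k hk)]; exact Finset.min'_le _ _ ha
  have hle_mx : ∀ k (hk : k < M), ∀ a ∈ blk k, a ≤ mx k := by
    intro k hk a ha; rw [hmxd]; simp only [dif_pos (hblkne k hk)]; exact Finset.le_max' _ _ ha
  set u : ℕ → ℝ := fun k => f (mx k) with hu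
  set v : ℕ → ℝ := fun k => f (mn k) with hv
  have hvu : ∀ k < M, v k ≤ u k := by
    intro k hk
    exact fmono _ _ (hmn_le k hk _ (hmx_mem k hk))
  have hblk_lt : ∀ k k', k < M → k' < M → k < k' → mx k < mn k' := by
    intro k k' hk hk' hkk'
    have h1 := (Finset.mem_filter.1 (hmx_mem k hk)).2
    have h2 := (Finset.mem_filter.1 (hmn_mem k' hk')).2
    have hidx : idx B (mx k) < idx B (mn k') := by
      have : (k+1)*L ≤ k'*L := Nat.mul_le_mul_right L (by omega)
      omega
    rw [← idx_lt_iff B (hblkB k (hmx_mem k hk)) (hblkB k' (hmn_mem k' hk'))]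
    exact hidx
  -- number of blocks is at least 1
  have hn4L : 4 * L ≤ n := by
    have : (4 : ℝ) * L ≤ τ * n := by linarith
    have hτn : τ * n ≤ n := by
      nlinarith [mul_nonneg (sub_nonneg.2 hτ1) (Nat.cast_nonneg (α := ℝ) n)]
    exact_mod_cast le_trans this hτn
  have hM1 : 1 ≤ M := by
    rw [hM]
    rw [Nat.le_div_iff_mul_le (by omega)]
    omega
  -- telescoping bound on total spread
  have htel : ∑ k ∈ Finset.range M, (u k - v k) ≤ (N : ℝ) := by
    have h2 : ∀ k, k + 1 < M → u k ≤ v (k + 1) := by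
      intro k hk
      exact fmono _ _ (le_of_lt (hblk_lt k (k+1) (by omega) hk (by omega)))
    calc ∑ k ∈ Finset.range M, (u k - v k) ≤ u (M - 1) - v 0 := telescope_sum u v M hM1 h2
      _ ≤ (N : ℝ) := by
          have h1 : u (M-1) ≤ (N:ℝ) := by
            simp only [hu, hf]
            exact_mod_cast idx_le_card C (b₁ + mx (M-1))
          have h2 : (0:ℝ) ≤ v 0 := Nat.cast_nonneg _
          linarith
  -- wide blocks
  set wide := (Finset.range M).filter (fun k => ¬ (u k - v k ≤ τ * N / 2)) with hwide
  have hWbound : (wide.card : ℝ) ≤ 2 / τ := by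
    have hsum : (wide.card : ℝ) * (τ * N / 2) ≤ ∑ k ∈ wide, (u k - v k) := by
      have := Finset.card_nsmul_le_sum wide (fun k => u k - v k) (τ * N / 2) ?_
      · rwa [nsmul_eq_mul] at this
      · intro k hk
        rw [hwide, Finset.mem_filter] at hk
        linarith [not_le.1 hk.2]
    have hsum2 : ∑ k ∈ wide, (u k - v k) ≤ ∑ k ∈ Finset.range M, (u k - v k) := by
      apply Finset.sum_le_sum_of_subset_of_nonneg (Finset.filter_subset _ _)
      intro k hk _
      exact sub_nonneg.2 (hvu k (Finset.mem_range.1 hk))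
    have h3 : (wide.card : ℝ) * (τ * N / 2) ≤ N := by linarith
    rw [le_div_iff₀ hτ0]
    nlinarith [hNR]
  -- bad elements
  set badB := B.filter (fun a => ¬ (|f a - g a| ≤ τ * N / 2)) with hbadB
  have hbadbound : (badB.card : ℝ) ≤ 2 * Dq / (τ * N) := by
    have hsum : (badB.card : ℝ) * (τ * N / 2) ≤ ∑ a ∈ badB, |f a - g a| := by
      have := Finset.card_nsmul_le_sum badB (fun a => |f a - g a|) (τ * N / 2) ?_
      · rwa [nsmul_eq_mul] at this
      · intro a ha
        rw [hbadB, Finset.mem_filter] at ha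
        linarith [not_le.1 ha.2]
    have hsum2 : ∑ a ∈ badB, |f a - g a| ≤ Dq := by
      apply Finset.sum_le_sum_of_subset_of_nonneg (Finset.filter_subset _ _)
      intro a _ _; exact abs_nonneg _
    rw [le_div_iff₀ (by positivity)]
    nlinarith
  -- narrow blocks
  set narrow := (Finset.range M).filter (fun k => u k - v k ≤ τ * N / 2) with hnarrow
  have hnarrowcard : narrow.card + wide.card = M := by
    rw [hnarrow, hwide, Finset.card_filter_add_card_filter_not]
    exact Finset.card_range M
  -- the inclusion
  set target := (B ×ˢ B).filter
      (fun a : ℝ × ℝ => tClose B τ a.1 a.2 ∧ tClose C τ (b₁+a.1) (b₂+a.2)) with htarget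
  have hsub : narrow.biUnion (fun k => blk k ×ˢ (blk k \ badB)) ⊆ target := by
    intro p hp
    rw [Finset.mem_biUnion] at hp
    obtain ⟨k, hknarrow, hpmem⟩ := hp
    rw [Finset.mem_product] at hpmem
    obtain ⟨hp1, hp2'⟩ := hpmem
    rw [Finset.mem_sdiff] at hp2'
    obtain ⟨hp2, hp2nb⟩ := hp2'
    rw [hnarrow, Finset.mem_filter, Finset.mem_range] at hknarrow
    obtain ⟨hkM, hknar⟩ := hknarrow
    have hi1 := (Finset.mem_filter.1 hp1).2
    have hi2 := (Finset.mem_filter.1 hp2).2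
    rw [htarget, Finset.mem_filter, Finset.mem_product]
    refine ⟨⟨hblkB k hp1, hblkB k hp2⟩, ?_, ?_⟩
    · -- tClose B
      show |(idx B p.1 : ℝ) - (idx B p.2 : ℝ)| ≤ τ * (B.card : ℝ)
      have hLτ : (L : ℝ) ≤ τ * n := by
        have h0 : (0:ℝ) ≤ τ * (n:ℝ) := mul_nonneg hτ0.le (Nat.cast_nonneg _)
        linarith
      have habs : |(idx B p.1 : ℝ) - (idx B p.2 : ℝ)| ≤ (L : ℝ) := by
        rw [abs_sub_le_iff]
        constructor <;>
        · push_cast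
          have := hi1.1; have := hi1.2; have := hi2.1; have := hi2.2
          have h1 : ((k*L : ℕ) : ℝ) < (idx B p.1 : ℝ) := by exact_mod_cast hi1.1
          have h2 : ((idx B p.1 : ℝ)) ≤ (((k+1)*L : ℕ) : ℝ) := by exact_mod_cast hi1.2
          have h3 : ((k*L : ℕ) : ℝ) < (idx B p.2 : ℝ) := by exact_mod_cast hi2.1
          have h4 : ((idx B p.2 : ℝ)) ≤ (((k+1)*L : ℕ) : ℝ) := by exact_mod_cast hi2.2
          push_cast at h1 h2 h3 h4
          linarith
      exact le_trans habs hLτ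
    · -- tClose C
      show |(idx C (b₁ + p.1) : ℝ) - (idx C (b₂ + p.2) : ℝ)| ≤ τ * (C.card : ℝ)
      have ht1 : |f p.1 - f p.2| ≤ u k - v k := by
        have l1 : v k ≤ f p.1 := fmono _ _ (hmn_le k hkM _ hp1)
        have l2 : f p.1 ≤ u k := fmono _ _ (hle_mx k hkM _ hp1)
        have l3 : v k ≤ f p.2 := fmono _ _ (hmn_le k hkM _ hp2)
        have l4 : f p.2 ≤ u k := fmono _ _ (hle_mx k hkM _ hp2)
        rw [abs_sub_le_iff]
        exact ⟨by linarith, by linarith⟩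
      have ht2 : |f p.2 - g p.2| ≤ τ * N / 2 := by
        by_contra hcon
        exact hp2nb (Finset.mem_filter.2 ⟨hblkB k hp2, hcon⟩)
      calc |(idx C (b₁ + p.1) : ℝ) - (idx C (b₂ + p.2) : ℝ)|
          = |f p.1 - g p.2| := rfl
        _ ≤ |f p.1 - f p.2| + |f p.2 - g p.2| := abs_sub_le _ _ _
        _ ≤ (u k - v k) + τ * N / 2 := by linarith
        _ ≤ τ * N / 2 + τ * N / 2 := by linarith
        _ = τ * N := by ring
  -- counting
  have hblkdisj : ∀ k k' : ℕ, k ≠ k' → Disjoint (blk k) (blk k') := by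
    intro k k' hne
    rw [Finset.disjoint_left]
    intro a ha ha'
    have h1 := (Finset.mem_filter.1 ha).2
    have h2 := (Finset.mem_filter.1 ha').2
    rcases lt_or_gt_of_ne hne with hlt | hlt
    · have : (k+1)*L ≤ k'*L := Nat.mul_le_mul_right L hlt
      omega
    · have : (k'+1)*L ≤ k*L := Nat.mul_le_mul_right L hlt
      omega
  have hprodisj : ∀ k ∈ narrow, ∀ k' ∈ narrow, k ≠ k' →
      Disjoint (blk k ×ˢ (blk k \ badB)) (blk k' ×ˢ (blk k' \ badB)) := by
    intro k _ k' _ hne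
    rw [Finset.disjoint_left]
    intro p hmem hmem'
    rw [Finset.mem_product] at hmem hmem'
    exact (Finset.disjoint_left.1 (hblkdisj k k' hne)) hmem.1 hmem'.1
  have hcard1 : ∑ k ∈ narrow, (blk k ×ˢ (blk k \ badB)).card ≤ target.card := by
    rw [← Finset.card_biUnion hprodisj]
    exact Finset.card_le_card hsub
  have hintdisj : ∀ k ∈ narrow, ∀ k' ∈ narrow, k ≠ k' →
      Disjoint (blk k ∩ badB) (blk k' ∩ badB) := by
    intro k _ k' _ hne
    exact Finset.disjoint_of_subset_left (Finset.inter_subset_left)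
      (Finset.disjoint_of_subset_right (Finset.inter_subset_left) (hblkdisj k k' hne))
  have hintsum : ∑ k ∈ narrow, (blk k ∩ badB).card ≤ badB.card := by
    rw [← Finset.card_biUnion hintdisj]
    apply Finset.card_le_card
    intro a ha
    rw [Finset.mem_biUnion] at ha
    obtain ⟨k, -, hk⟩ := ha
    exact (Finset.mem_inter.1 hk).2
  have hsd : ∀ k ∈ narrow, ((blk k \ badB).card : ℝ)
      = (L : ℝ) - ((blk k ∩ badB).card : ℝ) := by
    intro k hk
    rw [hnarrow, Finset.mem_filter, Finset.mem_range] at hk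
    have := Finset.card_sdiff_add_card_inter (blk k) badB
    rw [hblkcard k hk.1] at this
    have h2 : ((blk k \ badB).card : ℝ) + ((blk k ∩ badB).card : ℝ) = (L:ℝ) := by
      exact_mod_cast this
    linarith
  have hnarrowR : (M : ℝ) - 2/τ ≤ (narrow.card : ℝ) := by
    have : (narrow.card : ℝ) + (wide.card : ℝ) = (M : ℝ) := by
      exact_mod_cast hnarrowcard
    linarith
  have hbadsumR : ∑ k ∈ narrow, ((blk k ∩ badB).card : ℝ) ≤ 2 * Dq / (τ * N) := by
    calc ∑ k ∈ narrow, ((blk k ∩ badB).card : ℝ) = ((∑ k ∈ narrow, (blk k ∩ badB).card : ℕ) : ℝ) := by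
          push_cast; ring
      _ ≤ (badB.card : ℝ) := by exact_mod_cast hintsum
      _ ≤ 2 * Dq / (τ * N) := hbadbound
  have hL0 : (0:ℝ) ≤ (L:ℝ) := Nat.cast_nonneg _
  have main : (L:ℝ) * ((L:ℝ) * narrow.card - ∑ k ∈ narrow, ((blk k ∩ badB).card : ℝ))
      ≤ (target.card : ℝ) := by
    calc (L:ℝ) * ((L:ℝ) * narrow.card - ∑ k ∈ narrow, ((blk k ∩ badB).card : ℝ))
        = ∑ k ∈ narrow, (L:ℝ) * ((L:ℝ) - ((blk k ∩ badB).card : ℝ)) := by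
          simp only [mul_sub]
          rw [Finset.sum_sub_distrib, Finset.sum_const, ← Finset.mul_sum, nsmul_eq_mul]
          ring
      _ = ∑ k ∈ narrow, ((blk k ×ˢ (blk k \ badB)).card : ℝ) := by
          apply Finset.sum_congr rfl
          intro k hk
          rw [Finset.card_product]
          push_cast
          rw [hsd k hk]
          have hkM : k < M := Finset.mem_range.1 (Finset.mem_of_mem_filter k hk)
          rw [hblkcard k hkM]
      _ ≤ (target.card : ℝ) := by
          calc ∑ k ∈ narrow, ((blk k ×ˢ (blk k \ badB)).card : ℝ)
              = ((∑ k ∈ narrow, (blk k ×ˢ (blk k \ badB)).card : ℕ) : ℝ) := by push_cast; ring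
            _ ≤ (target.card : ℝ) := by exact_mod_cast hcard1
  have hfinal : (L : ℝ)^2 * M - 2 * (L : ℝ)^2 / τ - 2 * (L : ℝ) / (τ * N) * Dq
      ≤ (L:ℝ) * ((L:ℝ) * narrow.card - ∑ k ∈ narrow, ((blk k ∩ badB).card : ℝ)) := by
    have e1 : (L:ℝ) * ((L:ℝ) * narrow.card - ∑ k ∈ narrow, ((blk k ∩ badB).card : ℝ))
        ≥ (L:ℝ) * ((L:ℝ) * ((M:ℝ) - 2/τ) - 2 * Dq / (τ * N)) := by
      apply mul_le_mul_of_nonneg_left _ hL0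
      have := mul_le_mul_of_nonneg_left hnarrowR hL0
      linarith
    have e2 : (L:ℝ) * ((L:ℝ) * ((M:ℝ) - 2/τ) - 2 * Dq / (τ * N))
        = (L : ℝ)^2 * M - 2 * (L : ℝ)^2 / τ - 2 * (L : ℝ) / (τ * N) * Dq := by
      field_simp
    linarith
  exact le_trans hfinal main

open scoped Classical in
lemma drift_sum (B C : Finset ℝ) (R' : Finset (ℝ × ℝ)) (K : ℕ)
    (hBR : ∀ q ∈ R', q.1 ∈ B ∧ q.2 ∈ B ∧
      idx B q.2 ≤ idx B q.1 + K ∧ idx B q.1 ≤ idx B q.2 + K) :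
    ∑ q ∈ R', ∑ a ∈ B, |(idx C (q.1+a) : ℝ) - (idx C (q.2+a) : ℝ)|
      ≤ 2 * (K*K) * B.card * C.card := by
  have habs : ∀ q ∈ R', ∀ a ∈ B, |(idx C (q.1+a) : ℝ) - (idx C (q.2+a) : ℝ)|
      = ((C.filter (fun s => min q.1 q.2 < s - a ∧ s - a ≤ max q.1 q.2)).card : ℝ) := by
    intro q _ a _
    rw [idx_abs_diff C (q.1+a) (q.2+a)]
    congr 1
    refine congrArg Finset.card (Finset.filter_congr ?_)
    intro s _
    simp only [min_add_add_right, max_add_add_right]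
    constructor
    · rintro ⟨h1, h2⟩
      exact ⟨by linarith, by linarith⟩
    · rintro ⟨h1, h2⟩
      exact ⟨by linarith, by linarith⟩
  calc ∑ q ∈ R', ∑ a ∈ B, |(idx C (q.1+a) : ℝ) - (idx C (q.2+a) : ℝ)|
      = ((∑ q ∈ R', ∑ a ∈ B,
          (C.filter (fun s => min q.1 q.2 < s - a ∧ s - a ≤ max q.1 q.2)).card : ℕ) : ℝ) := by
        push_cast
        apply Finset.sum_congr rfl
        intro q hq
        apply Finset.sum_congr rfl
        intro a ha
        exact habs q hq a ha
    _ ≤ ((B.card * (C.card * (2 * (K*K))) : ℕ) : ℝ) := by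
        have : (∑ q ∈ R', ∑ a ∈ B,
            (C.filter (fun s => min q.1 q.2 < s - a ∧ s - a ≤ max q.1 q.2)).card : ℕ)
            ≤ B.card * (C.card * (2 * (K*K))) := by
          rw [Finset.sum_comm]
          apply le_trans (Finset.sum_le_card_nsmul B _ (C.card * (2 * (K*K))) ?_)
          · rw [smul_eq_mul]
          · intro a _
            have : ∀ q ∈ R', (C.filter (fun s => min q.1 q.2 < s - a ∧ s - a ≤ max q.1 q.2)).card
                = ∑ s ∈ C, if min q.1 q.2 < s - a ∧ s - a ≤ max q.1 q.2 then 1 else 0 := by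
              intro q _
              rw [Finset.card_filter]
            rw [Finset.sum_congr rfl this, Finset.sum_comm]
            apply le_trans (Finset.sum_le_card_nsmul C _ (2 * (K*K)) ?_)
            · rw [smul_eq_mul]
            · intro s _
              have : (∑ q ∈ R', if min q.1 q.2 < s - a ∧ s - a ≤ max q.1 q.2 then 1 else 0)
                  = (R'.filter (fun q => min q.1 q.2 < s - a ∧ s - a ≤ max q.1 q.2)).card := by
                rw [Finset.card_filter]
              rw [this]
              exact straddle B R' K (s - a) hBR
        exact_mod_cast this
    _ ≤ 2 * (K*K) * B.card * C.card := by
        push_cast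
        ring_nf
        exact le_refl _

lemma tclose_count (B : Finset ℝ) (R' : Finset (ℝ × ℝ)) (K : ℕ)
    (hBR : ∀ q ∈ R', q.1 ∈ B ∧ q.2 ∈ B ∧
      idx B q.2 ≤ idx B q.1 + K ∧ idx B q.1 ≤ idx B q.2 + K) :
    R'.card ≤ B.card * (2*K+1) := by
  classical
  set n := B.card with hn
  set target := (Finset.Icc 1 n).biUnion
      (fun i => ({i} : Finset ℕ) ×ˢ Finset.Icc (i - K) (i + K)) with htarget
  have hmaps : ∀ q ∈ R', (idx B q.1, idx B q.2) ∈ target := by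
    intro q hq
    obtain ⟨h1, h2, h3, h4⟩ := hBR q hq
    rw [htarget, Finset.mem_biUnion]
    refine ⟨idx B q.1, ?_, ?_⟩
    · exact Finset.mem_Icc.2 ⟨idx_pos B h1, idx_le_card B q.1⟩
    · rw [Finset.mem_product, Finset.mem_singleton, Finset.mem_Icc]
      exact ⟨rfl, by omega, by omega⟩
  have hinj : Set.InjOn (fun q : ℝ × ℝ => (idx B q.1, idx B q.2)) R' := by
    intro q hq q' hq' heq
    obtain ⟨h1, h2, -, -⟩ := hBR q (by exact_mod_cast hq)
    obtain ⟨h1', h2', -, -⟩ := hBR q' (by exact_mod_cast hq')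
    exact Prod.ext (idx_injOn B h1 h1' (congrArg Prod.fst heq))
      (idx_injOn B h2 h2' (congrArg Prod.snd heq))
  calc R'.card ≤ target.card := Finset.card_le_card_of_injOn _ hmaps hinj
    _ ≤ ∑ i ∈ Finset.Icc 1 n, (({i} : Finset ℕ) ×ˢ Finset.Icc (i - K) (i + K)).card :=
        Finset.card_biUnion_le
    _ ≤ ∑ i ∈ Finset.Icc 1 n, (2*K+1) := by
        apply Finset.sum_le_sum
        intro i _
        rw [Finset.card_product, Finset.card_singleton, one_mul, Nat.card_Icc]
        omega
    _ ≤ n * (2*K+1) := by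
        rw [Finset.sum_const, smul_eq_mul, Nat.card_Icc]
        exact Nat.mul_le_mul_right _ (by omega)


open scoped Classical in
lemma sum_filter_prod_count {α β : Type*} (s : Finset α) (t : Finset β)
    (P : α → β → Prop) (f : α → ℕ) :
    ∑ p ∈ (s ×ˢ t).filter (fun p => P p.1 p.2), f p.1
      = ∑ q ∈ s, (t.filter (P q)).card * f q := by
  rw [Finset.sum_filter, Finset.sum_product]
  apply Finset.sum_congr rfl
  intro q _
  simp only
  rw [← Finset.sum_filter, Finset.sum_const, smul_eq_mul]

set_option maxHeartbeats 1600000 in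
theorem stmt17 (g h : Polynomial ℝ) (B : Finset ℝ) (t : ℝ)
    (ht0 : 0 < t) (ht1 : t ≤ 1) (htB : 1 ≤ t * (B.card : ℝ))
    (R S : Set (ℝ × ℝ)) (m : ℕ) (hm : 1 ≤ m)
    (hR : R ⊆ Pset g h B t) (hS : S ⊆ Pset g h B t)
    (hcard : R.ncard = S.ncard)
    (hreg : ∀ q ∈ R, m ≤ ({c' ∈ S | (q, c') ∈ StP g h B t}).ncard ∧
      ({c' ∈ S | (q, c') ∈ StP g h B t}).ncard ≤ 2 * m) :
    t / (128 * max ((R.ncard : ℝ) / (64 * t * (B.card : ℝ) ^ 2)) t) * (B.card : ℝ) ^ 2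
        * (((StP g h B t) ∩ (R ×ˢ S)).ncard : ℝ)
      ≤ ((Ttr h B S t (max ((R.ncard : ℝ) / (64 * t * (B.card : ℝ) ^ 2)) t)).ncard : ℝ) := by
  classical
  set n := B.card with hn
  set r := max ((R.ncard : ℝ) / (64 * t * (n : ℝ) ^ 2)) t with hr
  set τ := t / r with hτdef
  set C := B + B with hC
  -- basic facts
  have hn1 : 1 ≤ n := by
    by_contra hcon
    have h0 : n = 0 := by omega
    rw [h0] at htB
    norm_num at htB
  have hnR : (1:ℝ) ≤ (n:ℝ) := by exact_mod_cast hn1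
  have htn : (1:ℝ) ≤ t * (n:ℝ) := htB
  have hBne : B.Nonempty := Finset.card_pos.1 (by omega)
  have hCne : C.Nonempty := hBne.add hBne
  have hNpos : 0 < C.card := Finset.card_pos.2 hCne
  have hNR : (0:ℝ) < (C.card : ℝ) := by exact_mod_cast hNpos
  have hr0 : 0 < r := lt_of_lt_of_le ht0 (le_max_right _ _)
  have hτ0 : 0 < τ := div_pos ht0 hr0
  have hτ1 : τ ≤ 1 := (div_le_one hr0).2 (le_max_right _ _)
  -- finsets for R and S
  have hBBfin : (↑(B ×ˢ B) : Set (ℝ × ℝ)).Finite := (B ×ˢ B).finite_toSet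
  have hPsub : Pset g h B t ⊆ ↑(B ×ˢ B) := by
    intro q hq
    rw [Finset.coe_product]
    exact ⟨hq.1, hq.2.1⟩
  have hRfin : R.Finite := hBBfin.subset (fun q hq => hPsub (hR hq))
  have hSfin : S.Finite := hBBfin.subset (fun q hq => hPsub (hS hq))
  set R' := hRfin.toFinset with hR'def
  set S' := hSfin.toFinset with hS'def
  have hRmem : ∀ q, q ∈ R' ↔ q ∈ R := fun q => hRfin.mem_toFinset
  have hSmem : ∀ q, q ∈ S' ↔ q ∈ S := fun q => hSfin.mem_toFinset
  have hRncard : R.ncard = R'.card := by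
    rw [← Set.ncard_coe_finset R', hR'def, hRfin.coe_toFinset]
  -- closeness in ℕ
  set K := ⌊t * (n:ℝ)⌋₊ with hK
  have hK0R : (0:ℝ) ≤ t * (n:ℝ) := by positivity
  have hKtn : (K:ℝ) ≤ t * (n:ℝ) := Nat.floor_le hK0R
  have hBR : ∀ q ∈ R', q.1 ∈ B ∧ q.2 ∈ B ∧
      idx B q.2 ≤ idx B q.1 + K ∧ idx B q.1 ≤ idx B q.2 + K := by
    intro q hq
    obtain ⟨h1, h2, h3, -⟩ := hR ((hRmem q).1 hq)
    have habs := abs_le.1 h3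
    have hlt : t * (n:ℝ) < (K:ℝ) + 1 := Nat.lt_floor_add_one _
    refine ⟨h1, h2, ?_, ?_⟩
    · have : (idx B q.2 : ℝ) < (idx B q.1 : ℝ) + (K:ℝ) + 1 := by linarith only [habs.1, hlt]
      have : idx B q.2 < idx B q.1 + K + 1 := by exact_mod_cast this
      omega
    · have : (idx B q.1 : ℝ) < (idx B q.2 : ℝ) + (K:ℝ) + 1 := by linarith only [habs.2, hlt]
      have : idx B q.1 < idx B q.2 + K + 1 := by exact_mod_cast this
      omega
  -- the pair/partner structures
  set eqn := fun (q c : ℝ × ℝ) => h.eval q.1 + h.eval c.1 = h.eval q.2 + h.eval c.2 with heqn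
  set pc := fun q => (S'.filter (eqn q)).card with hpc
  set valid := (R' ×ˢ S').filter (fun p => eqn p.1 p.2) with hvalid
  set Good := fun q : ℝ × ℝ => (B ×ˢ B).filter
      (fun a : ℝ × ℝ => tClose B τ a.1 a.2 ∧ tClose C τ (q.1+a.1) (q.2+a.2)) with hGood
  -- F1 : the intersection is valid
  have hsetstar : StP g h B t ∩ R ×ˢ S = ↑valid := by
    ext p
    constructor
    · rintro ⟨hstp, hp1, hp2⟩
      rw [Finset.mem_coe, hvalid, Finset.mem_filter, Finset.mem_product]
      exact ⟨⟨(hRmem p.1).2 hp1, (hSmem p.2).2 hp2⟩, hstp.2.2⟩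
    · intro hp
      rw [Finset.mem_coe, hvalid, Finset.mem_filter, Finset.mem_product] at hp
      obtain ⟨⟨hp1, hp2⟩, hpe⟩ := hp
      have hp1' := (hRmem p.1).1 hp1
      have hp2' := (hSmem p.2).1 hp2
      exact ⟨⟨hR hp1', hS hp2', hpe⟩, hp1', hp2'⟩
  have hstar : (((StP g h B t) ∩ (R ×ˢ S)).ncard : ℝ) = (valid.card : ℝ) := by
    rw [hsetstar, Set.ncard_coe_finset]
  -- F2 : partner counts
  have hpcm : ∀ q ∈ R', m ≤ pc q ∧ pc q ≤ 2 * m := by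
    intro q hq
    have hqR : q ∈ R := (hRmem q).1 hq
    have hsetq : {c' ∈ S | (q, c') ∈ StP g h B t} = ↑(S'.filter (eqn q)) := by
      ext c
      constructor
      · rintro ⟨hcS, hstp⟩
        rw [Finset.mem_coe, Finset.mem_filter]
        exact ⟨(hSmem c).2 hcS, hstp.2.2⟩
      · intro hc
        rw [Finset.mem_coe, Finset.mem_filter] at hc
        have hcS := (hSmem c).1 hc.1
        exact ⟨hcS, ⟨hR hqR, hS hcS, hc.2⟩⟩
    have := hreg q hqR
    rw [hsetq, Set.ncard_coe_finset] at this
    exact this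
  -- F5 : sum decompositions
  have hdomsum : ∑ p ∈ valid, (Good p.1).card = ∑ q ∈ R', pc q * (Good q).card := by
    rw [hvalid]
    exact sum_filter_prod_count R' S' eqn (fun q => (Good q).card)
  have hvalidcard : valid.card = ∑ q ∈ R', pc q := by
    rw [hvalid, Finset.card_eq_sum_ones]
    calc ∑ p ∈ (R' ×ˢ S').filter (fun p => eqn p.1 p.2), 1
        = ∑ p ∈ (R' ×ˢ S').filter (fun p => eqn p.1 p.2), (fun _ => 1) p.1 := rfl
      _ = ∑ q ∈ R', (S'.filter (eqn q)).card * 1 := sum_filter_prod_count R' S' eqn (fun _ => 1)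
      _ = ∑ q ∈ R', pc q := by simp [hpc]
  -- F4 : injection into Ttr
  set Dom := valid.sigma (fun p => Good p.1) with hDom
  set Φ := fun x : (Σ _ : (ℝ × ℝ) × (ℝ × ℝ), ℝ × ℝ) =>
    (x.1.1.1 + x.2.1, x.1.1.2 + x.2.2, x.2.1, x.2.2, x.1.2.1, x.1.2.2) with hΦ
  have hdommem : ∀ x ∈ Dom, x.1.1 ∈ R' ∧ x.1.2 ∈ S' ∧ eqn x.1.1 x.1.2 ∧ x.2 ∈ Good x.1.1 := by
    intro x hx
    rw [hDom, Finset.mem_sigma] at hx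
    obtain ⟨hxv, hxg⟩ := hx
    rw [hvalid, Finset.mem_filter, Finset.mem_product] at hxv
    exact ⟨hxv.1.1, hxv.1.2, hxv.2, hxg⟩
  have hGoodmem : ∀ q a, a ∈ Good q → a.1 ∈ B ∧ a.2 ∈ B ∧ tClose B τ a.1 a.2 ∧
      tClose C τ (q.1+a.1) (q.2+a.2) := by
    intro q a ha
    rw [hGood] at ha
    simp only [Finset.mem_filter, Finset.mem_product] at ha
    exact ⟨ha.1.1, ha.1.2, ha.2.1, ha.2.2⟩
  have himg : ∀ x ∈ Dom, Φ x ∈ Ttr h B S t r := by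
    intro x hx
    obtain ⟨hx1, hx2, hxe, hxg⟩ := hdommem x hx
    obtain ⟨ha1, ha2, hta, htc⟩ := hGoodmem _ _ hxg
    have hq := hR ((hRmem x.1.1).1 hx1)
    refine ⟨x.1.1.1 + x.2.1, x.1.1.2 + x.2.2, x.2.1, x.2.2, x.1.2.1, x.1.2.2, rfl,
      ?_, ?_, ha1, ha2, ?_, ?_, ?_, ?_⟩
    · exact Finset.add_mem_add hq.1 ha1
    · exact Finset.add_mem_add hq.2.1 ha2
    · rw [Prod.mk.eta]
      exact (hSmem x.1.2).1 hx2
    · rw [add_sub_cancel_right, add_sub_cancel_right]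
      exact hxe
    · exact htc
    · exact hta
  have hinjΦ : Set.InjOn Φ Dom := by
    intro x hx y hy hxy
    rw [hΦ] at hxy
    simp only [Prod.mk.injEq] at hxy
    obtain ⟨e1, e2, e3, e4, e5, e6⟩ := hxy
    have h11 : x.1.1.1 = y.1.1.1 := by rw [e3] at e1; exact add_right_cancel e1
    have h12 : x.1.1.2 = y.1.1.2 := by rw [e4] at e2; exact add_right_cancel e2
    have hfst : x.1 = y.1 := by
      apply Prod.ext (Prod.ext h11 h12) (Prod.ext e5 e6)
    obtain ⟨xf, xs⟩ := x
    obtain ⟨yf, ys⟩ := y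
    simp only at hfst h11 h12 e3 e4
    subst hfst
    congr 1
    exact Prod.ext e3 e4
  have hTfin : (Ttr h B S t r).Finite := by
    apply Set.Finite.subset ((C ×ˢ C ×ˢ B ×ˢ B ×ˢ B ×ˢ B).finite_toSet)
    rintro x ⟨β₁, β₂, b₁', b₂', c₁, c₂, rfl, h1, h2, h3, h4, h5, -⟩
    have hc := hS h5
    have h1' : β₁ ∈ C := by rw [hC]; exact h1
    have h2' : β₂ ∈ C := by rw [hC]; exact h2
    simp only [Finset.coe_product, Set.mem_prod]
    exact ⟨h1', h2', h3, h4, hc.1, hc.2.1⟩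
  have hT : (∑ p ∈ valid, ((Good p.1).card) : ℝ) ≤ ((Ttr h B S t r).ncard : ℝ) := by
    have h1 : Dom.card = ∑ p ∈ valid, (Good p.1).card := Finset.card_sigma _ _
    have h2 : (Dom.image Φ).card = Dom.card := Finset.card_image_of_injOn hinjΦ
    have h3 : (↑(Dom.image Φ) : Set (ℝ×ℝ×ℝ×ℝ×ℝ×ℝ)) ⊆ Ttr h B S t r := by
      intro y hy
      rw [Finset.coe_image] at hy
      obtain ⟨x, hx, rfl⟩ := hy
      exact himg x hx
    have h4 := Set.ncard_le_ncard h3 hTfin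
    rw [Set.ncard_coe_finset, h2, h1] at h4
    exact_mod_cast h4
  -- final assembly
  rw [hstar]
  rcases le_or_gt ((R.ncard : ℝ) / (64 * t * (n : ℝ) ^ 2)) t with hcase | hcase
  · -- easy case : r = t
    have hrt : r = t := max_eq_right hcase
    have hτ1' : τ = 1 := by rw [hτdef, hrt, div_self (ne_of_gt ht0)]
    have hGoodfull : ∀ q ∈ R', (Good q).card = n * n := by
      intro q _
      rw [hGood]
      simp only
      rw [Finset.filter_true_of_mem, Finset.card_product]
      intro a ha
      rw [Finset.mem_product] at ha
      constructor
      · show |(idx B a.1 : ℝ) - (idx B a.2 : ℝ)| ≤ τ * (B.card : ℝ)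
        rw [hτ1', one_mul, abs_sub_le_iff]
        have i1 : (idx B a.1 : ℝ) ≤ (B.card : ℝ) := by exact_mod_cast idx_le_card B a.1
        have i2 : (idx B a.2 : ℝ) ≤ (B.card : ℝ) := by exact_mod_cast idx_le_card B a.2
        have i3 : (0:ℝ) ≤ (idx B a.1 : ℝ) := Nat.cast_nonneg _
        have i4 : (0:ℝ) ≤ (idx B a.2 : ℝ) := Nat.cast_nonneg _
        constructor <;> linarith only [i1, i2, i3, i4]
      · show |(idx C (q.1+a.1) : ℝ) - (idx C (q.2+a.2) : ℝ)| ≤ τ * (C.card : ℝ)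
        rw [hτ1', one_mul, abs_sub_le_iff]
        have i1 : (idx C (q.1+a.1) : ℝ) ≤ (C.card : ℝ) := by exact_mod_cast idx_le_card C _
        have i2 : (idx C (q.2+a.2) : ℝ) ≤ (C.card : ℝ) := by exact_mod_cast idx_le_card C _
        have i3 : (0:ℝ) ≤ (idx C (q.1+a.1) : ℝ) := Nat.cast_nonneg _
        have i4 : (0:ℝ) ≤ (idx C (q.2+a.2) : ℝ) := Nat.cast_nonneg _
        constructor <;> linarith only [i1, i2, i3, i4]
    have hsum : (∑ p ∈ valid, ((Good p.1).card) : ℝ) = (n:ℝ) * n * valid.card := by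
      have hcong : ∀ p ∈ valid, (((Good p.1).card : ℕ) : ℝ) = (n:ℝ) * n := by
        intro p hp
        rw [hvalid, Finset.mem_filter, Finset.mem_product] at hp
        rw [hGoodfull p.1 hp.1.1]
        push_cast
        ring
      rw [Finset.sum_congr rfl hcong, Finset.sum_const, nsmul_eq_mul]
      ring
    have hcoef : t / (128 * r) = 1 / 128 := by
      rw [hrt]
      field_simp
    rw [hcoef]
    have h0' : (0:ℝ) ≤ (n:ℝ) * n * valid.card :=
      mul_nonneg (mul_nonneg (Nat.cast_nonneg _) (Nat.cast_nonneg _)) (Nat.cast_nonneg _)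
    have hnn : ((n:ℝ)) ^ 2 = (n:ℝ) * (n:ℝ) := by ring
    rw [hnn]
    linarith only [hT, hsum, h0']
  · -- hard case : r = ρ > t
    have hrρ : r = (R.ncard : ℝ) / (64 * t * (n : ℝ) ^ 2) := max_eq_left hcase.le
    have hn0R : (0:ℝ) < (n:ℝ) := lt_of_lt_of_le zero_lt_one hnR
    have hden : (0:ℝ) < 64 * t * (n:ℝ)^2 := by positivity
    have hρpos : 0 < (R.ncard : ℝ) / (64 * t * (n : ℝ) ^ 2) := lt_trans ht0 hcase
    have hRcR : (R.ncard : ℝ) = (R'.card : ℝ) := by exact_mod_cast hRncard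
    have hRceq : (R'.card : ℝ) = 64 * t * r * (n:ℝ)^2 := by
      rw [hrρ, ← hRcR]
      field_simp
    have hRc0 : (0:ℝ) < (R'.card : ℝ) := by
      have heq2 : (R.ncard:ℝ) = ((R.ncard:ℝ)/(64*t*(n:ℝ)^2)) * (64*t*(n:ℝ)^2) := by
        field_simp
      rw [← hRcR, heq2]
      exact mul_pos hρpos hden
    -- upper bound on R'.card
    have hRle : (R'.card : ℝ) ≤ 3 * t * (n:ℝ)^2 := by
      have hcount := tclose_count B R' K hBR
      have hcountR : (R'.card : ℝ) ≤ (n:ℝ) * (2*(K:ℝ)+1) := by exact_mod_cast hcount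
      nlinarith only [hKtn, htn, hn0R, hcountR, Nat.cast_nonneg (α := ℝ) K]
    -- τ n is large
    have hrle : r ≤ 3/64 := by
      rw [hrρ, div_le_iff₀ hden]
      nlinarith only [hRle, hRcR]
    have hτn : (64:ℝ)/3 ≤ τ * n := by
      have hτn' : τ * n = (t*n)/r := by rw [hτdef]; ring
      rw [hτn', le_div_iff₀ hr0]
      linarith only [htn, hrle, hr0]
    -- L and M
    set L := ⌊τ * (n:ℝ) / 4⌋₊ with hLdef
    have hτn40 : (0:ℝ) ≤ τ * (n:ℝ) / 4 := div_nonneg (mul_nonneg hτ0.le hn0R.le) (by norm_num)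
    have hLle : (L:ℝ) ≤ τ * (n:ℝ) / 4 := Nat.floor_le hτn40
    have hL1 : 1 ≤ L := by
      rw [hLdef]
      apply Nat.le_floor
      push_cast
      linarith only [hτn]
    have hLlow : τ * (n:ℝ) / 4 - 1 ≤ (L:ℝ) := by
      linarith only [Nat.lt_floor_add_one (τ * (n:ℝ) / 4)]
    have hL0 : (0:ℝ) ≤ (L:ℝ) := Nat.cast_nonneg _
    set M := n / L with hMdef
    have hMLn : (n:ℝ) - L ≤ (M:ℝ) * L := by
      have e1 := Nat.div_add_mod n L
      have e2 : n % L < L := Nat.mod_lt n (by omega)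
      have e1' : (L:ℝ) * (M:ℝ) + ((n % L : ℕ):ℝ) = (n:ℝ) := by
        rw [hMdef]; exact_mod_cast e1
      have e2' : ((n % L : ℕ):ℝ) < (L:ℝ) := by exact_mod_cast e2
      linarith only [e1', e2']
    -- drift function
    set Dfun := fun q : ℝ × ℝ => ∑ a ∈ B, |(idx C (q.1+a) : ℝ) - (idx C (q.2+a) : ℝ)|
      with hDfun
    have hDfun0 : ∀ q, 0 ≤ Dfun q := by
      intro q
      exact Finset.sum_nonneg (fun a _ => abs_nonneg _)
    have hdrift : ∑ q ∈ R', Dfun q ≤ 2 * ((K:ℝ)*K) * (n:ℝ) * (C.card:ℝ) := by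
      have h := drift_sum B C R' K hBR
      calc ∑ q ∈ R', Dfun q ≤ (2 * ((K:ℝ)*(K:ℝ)) * (B.card:ℝ) * (C.card:ℝ) : ℝ) := h
        _ = 2 * ((K:ℝ)*K) * (n:ℝ) * (C.card:ℝ) := by simp only [hn]
    -- per-q lower bound
    have hper : ∀ q ∈ R',
        (L:ℝ)^2 * M - 2*(L:ℝ)^2/τ - 2*(L:ℝ)/(τ*(C.card:ℝ)) * Dfun q ≤ ((Good q).card : ℝ) := by
      intro q _
      exact good_lower B C q.1 q.2 τ L M hτ0 hτ1 hNpos hL1 hLle hMdef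
    have hsumper : (R'.card:ℝ) * ((L:ℝ)^2 * M - 2*(L:ℝ)^2/τ)
        - 2*(L:ℝ)/(τ*(C.card:ℝ)) * (∑ q ∈ R', Dfun q)
        ≤ ∑ q ∈ R', ((Good q).card : ℝ) := by
      have h1 := Finset.sum_le_sum hper
      have h2 : ∑ q ∈ R', ((L:ℝ)^2 * M - 2*(L:ℝ)^2/τ - 2*(L:ℝ)/(τ*(C.card:ℝ)) * Dfun q)
          = (R'.card:ℝ) * ((L:ℝ)^2 * M - 2*(L:ℝ)^2/τ)
            - 2*(L:ℝ)/(τ*(C.card:ℝ)) * (∑ q ∈ R', Dfun q) := by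
        rw [Finset.sum_sub_distrib, Finset.sum_const, ← Finset.mul_sum, nsmul_eq_mul]
      linarith only [h1, h2]
    -- arithmetic to the clean bound
    have hc1 : ∑ q ∈ R', Dfun q ≤ 2 * (t*(n:ℝ))^2 * (n:ℝ) * (C.card:ℝ) := by
      have hK0 : (0:ℝ) ≤ (K:ℝ) := Nat.cast_nonneg _
      have hKK : (K:ℝ)*(K:ℝ) ≤ (t*(n:ℝ))^2 := by nlinarith only [hKtn, hK0]
      have hnN : (0:ℝ) ≤ (n:ℝ)*(C.card:ℝ) := mul_nonneg hn0R.le hNR.le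
      nlinarith only [hdrift, hKK, hnN]
    have hc2 : (0:ℝ) ≤ 2*(L:ℝ)/(τ*(C.card:ℝ)) := div_nonneg (mul_nonneg (by norm_num) hL0) (mul_nonneg hτ0.le hNR.le)
    have hc3 : 2*(L:ℝ)/(τ*(C.card:ℝ)) * (∑ q ∈ R', Dfun q) ≤ 4*(L:ℝ)*t^2*(n:ℝ)^3/τ := by
      have := mul_le_mul_of_nonneg_left hc1 hc2
      have heq3 : 2*(L:ℝ)/(τ*(C.card:ℝ)) * (2 * (t*(n:ℝ))^2 * (n:ℝ) * (C.card:ℝ))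
          = 4*(L:ℝ)*t^2*(n:ℝ)^3/τ := by
        rw [div_mul_eq_mul_div, div_eq_div_iff (mul_pos hτ0 hNR).ne' hτ0.ne']
        ring
      linarith only [this, heq3]
    have hc4 : 4*(L:ℝ)*t^2*(n:ℝ)^3/τ = (L:ℝ)*(n:ℝ)*(R'.card:ℝ)/16 := by
      rw [hRceq, hτdef]
      field_simp
      ring
    have hc5 : (L:ℝ)*((n:ℝ)-L) ≤ (L:ℝ)^2*M := by nlinarith only [hMLn, hL0]
    have hc6 : 2*(L:ℝ)^2/τ ≤ (L:ℝ)*(n:ℝ)/2 := by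
      rw [div_le_iff₀ hτ0]
      nlinarith only [hLle, hL0, hτ0.le]
    have hc7 : (L:ℝ) ≤ (n:ℝ)/4 := by nlinarith only [hLle, hτ1, hn0R.le]
    have hc8 : (L:ℝ)^2*M - 2*(L:ℝ)^2/τ ≥ (L:ℝ)*(n:ℝ)/4 := by
      nlinarith only [hc5, hc6, hc7, hL0]
    have hmain0 : (3:ℝ)/16 * ((L:ℝ)*(n:ℝ)*(R'.card:ℝ)) ≤ ∑ q ∈ R', ((Good q).card : ℝ) := by
      have e1 : (R'.card:ℝ) * ((L:ℝ)*(n:ℝ)/4) ≤ (R'.card:ℝ) * ((L:ℝ)^2*M - 2*(L:ℝ)^2/τ) :=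
        mul_le_mul_of_nonneg_left hc8 hRc0.le
      have h2 := hsumper
      rw [hc4] at hc3
      linarith only [e1, h2, hc3]
    have hL13 : (13:ℝ)/64 * (τ*(n:ℝ)) ≤ (L:ℝ) := by linarith only [hτn, hLlow]
    have hmain : τ/64 * (n:ℝ)^2 * (R'.card:ℝ) ≤ ∑ q ∈ R', ((Good q).card : ℝ) := by
      have hnRc0 : (0:ℝ) ≤ (n:ℝ) * (R'.card:ℝ) := mul_nonneg hn0R.le hRc0.le
      have h3 := mul_le_mul_of_nonneg_left hL13 hnRc0
      have hpos : (0:ℝ) ≤ τ * (n:ℝ)^2 * (R'.card:ℝ) :=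
        mul_nonneg (mul_nonneg hτ0.le (sq_nonneg _)) hRc0.le
      nlinarith only [hmain0, h3, hpos]
    -- finish
    have hpcsum : (valid.card:ℝ) ≤ 2*(m:ℝ)*(R'.card:ℝ) := by
      have : valid.card ≤ R'.card * (2*m) := by
        rw [hvalidcard]
        calc ∑ q ∈ R', pc q ≤ ∑ q ∈ R', 2*m :=
              Finset.sum_le_sum (fun q hq => (hpcm q hq).2)
          _ = R'.card * (2*m) := by rw [Finset.sum_const, smul_eq_mul]
      have h' : (valid.card:ℝ) ≤ (R'.card:ℝ) * (2*(m:ℝ)) := by exact_mod_cast this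
      linarith only [h']
    have hmGc : (m:ℝ) * ∑ q ∈ R', ((Good q).card : ℝ) ≤ ∑ p ∈ valid, ((Good p.1).card:ℝ) := by
      have e1 : ∀ q ∈ R', (m:ℝ) * ((Good q).card:ℝ) ≤ (pc q:ℝ) * ((Good q).card:ℝ) := by
        intro q hq
        apply mul_le_mul_of_nonneg_right _ (Nat.cast_nonneg _)
        exact_mod_cast (hpcm q hq).1
      calc (m:ℝ) * ∑ q ∈ R', ((Good q).card : ℝ)
          = ∑ q ∈ R', (m:ℝ) * ((Good q).card : ℝ) := Finset.mul_sum _ _ _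
        _ ≤ ∑ q ∈ R', (pc q:ℝ) * ((Good q).card : ℝ) := Finset.sum_le_sum e1
        _ = ∑ p ∈ valid, ((Good p.1).card:ℝ) := by
            rw [show (∑ p ∈ valid, ((Good p.1).card:ℝ))
                = ((∑ p ∈ valid, (Good p.1).card : ℕ) : ℝ) by push_cast; ring]
            rw [hdomsum]
            push_cast
            ring
    have hcoef : t/(128*r) = τ/128 := by rw [hτdef, div_div, mul_comm]
    rw [hcoef]
    have hm0 : (0:ℝ) ≤ (m:ℝ) := Nat.cast_nonneg _
    have hstep : τ/128 * (n:ℝ)^2 * (valid.card:ℝ)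
        ≤ (m:ℝ) * (τ/64 * (n:ℝ)^2 * (R'.card:ℝ)) := by
      have hkey : τ/128 * (n:ℝ)^2 * (2*(m:ℝ)*(R'.card:ℝ))
          = (m:ℝ) * (τ/64 * (n:ℝ)^2 * (R'.card:ℝ)) := by ring
      have hmono : τ/128 * (n:ℝ)^2 * (valid.card:ℝ)
          ≤ τ/128 * (n:ℝ)^2 * (2*(m:ℝ)*(R'.card:ℝ)) := by
        apply mul_le_mul_of_nonneg_left hpcsum
        exact mul_nonneg (div_nonneg hτ0.le (by norm_num)) (sq_nonneg _)
      linarith only [hkey, hmono]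
    have hstep2 := mul_le_mul_of_nonneg_left hmain hm0
    linarith only [hT, hmGc, hstep, hstep2]
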